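/- Let q be a prime power and r ≥ 2 an integer. Let (C^{(h)})_{h∈[r]} be finite based cochain complexes over F_q of dimension 2, and let ζ : (C^{(1)})^1 × ⋯ × (C^{(r)})^1 → F_q be a multilinear form of locality w^ζ ≥ 1 that is coboundary-invariant on some H' = (H'_h ⊆ H^1(C^{(h)}))_{h∈[r]} (with B_h = B^1(C^{(h)}) and Z_h = Z^1(C^{(h)})). Then there exist finite based cochain complexes (C̃^{(h)})_{h∈[r]} of dimension 2 over F_q and a multilinear form ζ̃ : (C̃^{(1)})^1 × ⋯ × (C̃^{(r)})^1 → F_q that is coboundary-invariant on some H̃' = (H̃'_h ⊆ H^1(C̃^{(h)}))_{h∈[r]}, such that for every h ∈ [r]: dim (C̃^{(h)})^1 = w^ζ · dim (C^{(h)})^1; dim H^1(C̃^{(h)}) = dim H^1(C^{(h)}); d^1(C̃^{(h)}) = w^ζ · d^1(C^{(h)}); d_1(C̃^{(h)}) ≥ d_1(C^{(h)}); the locality of C̃^{(h)} is at most max{w^ζ · w^{C^{(h)}}, w^{C^{(h)}} + 2}; ζ̃ has locality 1; and subrank(ζ̃_{H̃'}) = subrank(ζ_{H'}). -/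

import Mathlib

/-!
Replace the 1-cochains of each complex by `w = w^ζ` copies, tied together along a cycle by new
2-cells `y (u, i) - y (u, i + 1)`, with `d1` reading only copy `0`. The 1-cocycles of the new
complex are exactly the replicated 1-cocycles and the same holds for coboundaries, so cohomology
is unchanged and cosystolic weights are multiplied by `w`; summing over the copies sends
systolic cycles to systolic cycles without increasing their weight.

Every basis element lies in at most `w` basis tuples on which `ζ` is nonzero, so these tuples
can be coloured by `Fin w` such that tuples sharing an entry get different colours. The form
`ζ̃` puts the coefficient of a tuple on the copies named by its colour: it has locality `1`
and agrees with `ζ` on replicated cochains, which carries over coboundary invariance and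
subrank.
-/

open scoped BigOperators
open Matrix

/-- A finite based cochain complex of dimension 2 over `F`: finite basis sets
`b0, b1, b2`, cochain spaces `bᵢ → F`, and coboundary maps `d0, d1` with `d1 ∘ d0 = 0`. -/
structure BCC2 (F : Type) [Field F] : Type 1 where
  b0 : Type
  b1 : Type
  b2 : Type
  [fin0 : Fintype b0]
  [fin1 : Fintype b1]
  [fin2 : Fintype b2]
  [dec0 : DecidableEq b0]
  [dec1 : DecidableEq b1]
  [dec2 : DecidableEq b2]
  d0 : (b0 → F) →ₗ[F] (b1 → F)
  d1 : (b1 → F) →ₗ[F] (b2 → F)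
  dd : ∀ f, d1 (d0 f) = 0

attribute [instance] BCC2.fin0 BCC2.fin1 BCC2.fin2 BCC2.dec0 BCC2.dec1 BCC2.dec2

variable {F : Type} [Field F]

/-- The matrix of a linear map between function spaces in the standard bases. -/
noncomputable def tmat {α β : Type} [DecidableEq α] (L : (α → F) →ₗ[F] (β → F)) :
    Matrix β α F := fun b a => L (Pi.single a 1) b

/-- The locality of a linear map between based spaces: the maximum number of nonzero
entries in a row or column of its matrix. -/
noncomputable def mapLoc {α β : Type} [Fintype α] [Fintype β] [DecidableEq α]
    (L : (α → F) →ₗ[F] (β → F)) : ℕ :=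
  max (Finset.univ.sup fun a : α => Nat.card {b : β | L (Pi.single a 1) b ≠ 0})
    (Finset.univ.sup fun b : β => Nat.card {a : α | L (Pi.single a 1) b ≠ 0})

namespace BCC2

/-- The locality `w^C` of the based complex `C`. -/
noncomputable def loc (C : BCC2 F) : ℕ := max (mapLoc C.d0) (mapLoc C.d1)

/-- The dimension of the first cohomology `H^1(C) = ker d1 / im d0`. -/
noncomputable def h1dim (C : BCC2 F) : ℕ :=
  Module.finrank F (LinearMap.ker C.d1) - Module.finrank F (LinearMap.range C.d0)

/-- The 1-cosystolic distance `d^1(C)`: the minimum Hamming weight of an element of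
`Z^1 \ B^1` (equal to `⊤` if this set is empty). -/
noncomputable def dcosys1 (C : BCC2 F) : ℕ∞ :=
  sInf ((fun x : C.b1 → F => Set.encard {u | x u ≠ 0}) ''
    {x | C.d1 x = 0 ∧ x ∉ LinearMap.range C.d0})

/-- The 1-systolic distance `d_1(C)`: the minimum Hamming weight of an `x ∈ F^{C(1)}` with
`δ₀ᵀ x = 0` and `x ∉ im (δ₁ᵀ)` (equal to `⊤` if this set is empty). -/
noncomputable def dsys1 (C : BCC2 F) : ℕ∞ :=
  sInf ((fun x : C.b1 → F => Set.encard {u | x u ≠ 0}) ''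
    {x | (tmat C.d0)ᵀ.mulVec x = 0 ∧
      x ∉ Set.range fun y : C.b2 → F => (tmat C.d1)ᵀ.mulVec y})

end BCC2

/-- The locality `w^ζ` of a multilinear form on the level-1 cochain spaces of the complexes
`Cs h`: the maximum, over `h` and a basis element `u` of `(Cs h).b1`, of the number of
`r`-tuples of basis elements whose `h`-th coordinate is `u` and on which `ζ` is nonzero. -/
noncomputable def zloc {r : ℕ} (Cs : Fin r → BCC2 F)
    (ζ : MultilinearMap F (fun h => (Cs h).b1 → F) F) : ℕ :=
  Finset.univ.sup fun h : Fin r => Finset.univ.sup fun u : (Cs h).b1 =>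
    Nat.card {uu : ∀ h', (Cs h').b1 //
      uu h = u ∧ ζ (fun h' => Pi.single (uu h') 1) ≠ 0}

/-- `ζ` is coboundary-invariant on the tuple of cohomology subspaces represented by the
intermediate subspaces `W h` (with `B^1 = range d0 ≤ W h ≤ Z^1 = ker d1`). -/
def CobInv {r : ℕ} (Cs : Fin r → BCC2 F)
    (ζ : MultilinearMap F (fun h => (Cs h).b1 → F) F)
    (W : ∀ h, Submodule F ((Cs h).b1 → F)) : Prop :=
  ∀ z b : ∀ h, (Cs h).b1 → F, (∀ h, z h ∈ W h) →
    (∀ h, b h ∈ LinearMap.range (Cs h).d0) →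
    ζ (fun h => z h + b h) = ζ z

/-- The induced form on the cohomology subspaces represented by `W` has subrank at least
`s`. -/
def SubrankGE {r : ℕ} (Cs : Fin r → BCC2 F)
    (ζ : MultilinearMap F (fun h => (Cs h).b1 → F) F)
    (W : ∀ h, Submodule F ((Cs h).b1 → F)) (s : ℕ) (hr : 0 < r) : Prop :=
  ∃ v : ∀ h, Fin s → ((Cs h).b1 → F), (∀ h j, v h j ∈ W h) ∧
    ∀ jj : Fin r → Fin s,
      ζ (fun h => v h (jj h)) = if ∀ h, jj h = jj ⟨0, hr⟩ then 1 else 0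

section Locality

lemma funLeft_single_apply_self {α α' : Type} [DecidableEq α] [DecidableEq α'] {φ : α → α'}
    (hφ : φ.Injective) (a : α) :
    LinearMap.funLeft F F φ (Pi.single (φ a) 1) = Pi.single a 1 := by
  ext x
  simp [LinearMap.funLeft_apply, Pi.single_apply, hφ.eq_iff]

lemma funLeft_single_of_notMem_range {α α' : Type} [DecidableEq α'] {φ : α → α'} {a' : α'}
    (h : a' ∉ Set.range φ) :
    LinearMap.funLeft F F φ (Pi.single a' (1 : F)) = 0 := by
  ext x
  simpa [LinearMap.funLeft_apply, Pi.single_apply] using fun hx => h ⟨x, hx⟩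

variable {α α' β γ : Type} [Fintype α] [Fintype α'] [Fintype β] [Fintype γ]
  [DecidableEq α] [DecidableEq α']

lemma ncard_col_le_mapLoc (L : (α → F) →ₗ[F] (β → F)) (a : α) :
    (Function.support (L (Pi.single a 1))).ncard ≤ mapLoc L := by
  rw [← Nat.card_coe_set_eq]
  exact le_max_of_le_left <|
    Finset.le_sup (f := fun a => Nat.card {b : β | L (Pi.single a 1) b ≠ 0}) (Finset.mem_univ a)

lemma ncard_row_le_mapLoc (L : (α → F) →ₗ[F] (β → F)) (b : β) :
    (Function.support fun a => L (Pi.single a 1) b).ncard ≤ mapLoc L := by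
  rw [← Nat.card_coe_set_eq]
  exact le_max_of_le_right <|
    Finset.le_sup (f := fun b => Nat.card {a : α | L (Pi.single a 1) b ≠ 0}) (Finset.mem_univ b)

lemma mapLoc_le {L : (α → F) →ₗ[F] (β → F)} {n : ℕ}
    (hcol : ∀ a, (Function.support (L (Pi.single a 1))).ncard ≤ n)
    (hrow : ∀ b, (Function.support fun a => L (Pi.single a 1) b).ncard ≤ n) :
    mapLoc L ≤ n :=
  max_le (Finset.sup_le fun a _ => (Nat.card_coe_set_eq _).trans_le (hcol a))
    (Finset.sup_le fun b _ => (Nat.card_coe_set_eq _).trans_le (hrow b))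

lemma mapLoc_id_le : mapLoc (LinearMap.id : (α → F) →ₗ[F] (α → F)) ≤ 1 := by
  refine mapLoc_le (fun a => ?_) (fun b => ?_)
  · exact (Set.ncard_le_ncard Pi.support_single_subset).trans
      (Set.ncard_singleton a).le
  · refine (Set.ncard_le_ncard (t := {b}) fun a ha => ?_).trans (Set.ncard_singleton b).le
    by_contra hab
    exact ha (Pi.single_eq_of_ne' hab 1)

lemma mapLoc_sub_le (L L' : (α → F) →ₗ[F] (β → F)) :
    mapLoc (L - L') ≤ mapLoc L + mapLoc L' := by
  refine mapLoc_le (fun a => ?_) (fun b => ?_)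
  · exact (Set.ncard_le_ncard (Function.support_sub _ _)).trans <|
      (Set.ncard_union_le _ _).trans <|
        add_le_add (ncard_col_le_mapLoc L a) (ncard_col_le_mapLoc L' a)
  · exact (Set.ncard_le_ncard (Function.support_sub (fun a => L (Pi.single a 1) b)
        (fun a => L' (Pi.single a 1) b))).trans <|
      (Set.ncard_union_le _ _).trans <|
        add_le_add (ncard_row_le_mapLoc L b) (ncard_row_le_mapLoc L' b)

lemma mapLoc_comp_funLeft_le (L : (α → F) →ₗ[F] (β → F)) {φ : α → α'}
    (hφ : φ.Injective) :
    mapLoc (L ∘ₗ LinearMap.funLeft F F φ) ≤ mapLoc L := by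
  refine mapLoc_le (fun a' => ?_) (fun b => ?_)
  · by_cases h : a' ∈ Set.range φ
    · obtain ⟨a, rfl⟩ := h
      simpa [funLeft_single_apply_self hφ] using ncard_col_le_mapLoc L a
    · simp [funLeft_single_of_notMem_range h]
  · refine (Set.ncard_le_ncard (t := φ '' Function.support fun a => L (Pi.single a 1) b)
      fun a' ha' => ?_).trans <|
        (Set.ncard_image_of_injective _ hφ).trans_le (ncard_row_le_mapLoc L b)
    by_cases h : a' ∈ Set.range φ
    · obtain ⟨a, rfl⟩ := h
      exact ⟨a, by simpa [funLeft_single_apply_self hφ] using ha', rfl⟩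
    · simp [funLeft_single_of_notMem_range h] at ha'

def sumElimL {X : Type} [AddCommMonoid X] [Module F X] (f : X →ₗ[F] (β → F))
    (g : X →ₗ[F] (γ → F)) : X →ₗ[F] (β ⊕ γ → F) where
  toFun x := Sum.elim (f x) (g x)
  map_add' x y := by ext (b | c) <;> simp
  map_smul' c x := by ext (b | c) <;> simp

lemma mapLoc_sumElimL_le (f : (α → F) →ₗ[F] (β → F))
    (g : (α → F) →ₗ[F] (γ → F)) :
    mapLoc (sumElimL f g) ≤ mapLoc f + mapLoc g := by
  refine mapLoc_le (fun a => ?_) (fun bc => ?_)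
  · have : Function.support (sumElimL f g (Pi.single a 1)) =
        Sum.inl '' Function.support (f (Pi.single a 1)) ∪
          Sum.inr '' Function.support (g (Pi.single a 1)) := by
      ext (b | c) <;> simp [sumElimL]
    rw [this]
    refine (Set.ncard_union_le _ _).trans (add_le_add ?_ ?_)
    · exact (Set.ncard_image_of_injective _ Sum.inl_injective).trans_le
        (ncard_col_le_mapLoc f a)
    · exact (Set.ncard_image_of_injective _ Sum.inr_injective).trans_le
        (ncard_col_le_mapLoc g a)
  · rcases bc with b | c
    · exact (ncard_row_le_mapLoc f b).trans (Nat.le_add_right _ _)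
    · exact (ncard_row_le_mapLoc g c).trans (Nat.le_add_left _ _)

lemma mapLoc_funLeft_fst_comp_le {w : ℕ} [NeZero w] (L : (α → F) →ₗ[F] (β → F)) :
    mapLoc (LinearMap.funLeft F F (Prod.fst : β × Fin w → β) ∘ₗ L) ≤ w * mapLoc L := by
  refine mapLoc_le (fun a => ?_) (fun p => ?_)
  · have : Function.support ((LinearMap.funLeft F F (Prod.fst : β × Fin w → β) ∘ₗ L)
        (Pi.single a 1)) = Function.support (L (Pi.single a 1)) ×ˢ Set.univ := by
      ext p; simp [LinearMap.funLeft_apply]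
    rw [this, Set.ncard_prod, Set.ncard_univ, Nat.card_eq_fintype_card, Fintype.card_fin,
      mul_comm]
    exact Nat.mul_le_mul_left w (ncard_col_le_mapLoc L a)
  · exact (ncard_row_le_mapLoc L p.1).trans (Nat.le_mul_of_pos_left _ (NeZero.pos w))

lemma transpose_tmat_mulVec_apply {α β : Type} [Fintype β] [DecidableEq α]
    (L : (α → F) →ₗ[F] (β → F)) (y : β → F) (a : α) :
    ((tmat L)ᵀ *ᵥ y) a = ∑ b, L (Pi.single a 1) b * y b := rfl

end Locality

section Replicate

noncomputable def replicateL (α : Type) (w : ℕ) : (α → F) →ₗ[F] (α × Fin w → F) :=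
  LinearMap.funLeft F F Prod.fst

@[simp] lemma replicateL_apply {α : Type} {w : ℕ} (x : α → F) (p : α × Fin w) :
    replicateL α w x p = x p.1 := rfl

lemma replicateL_injective {α : Type} {w : ℕ} [NeZero w] :
    Function.Injective (replicateL (F := F) α w) :=
  LinearMap.funLeft_injective_of_surjective _ _ _ Prod.fst_surjective

lemma finrank_map_replicateL {α : Type} {w : ℕ} [NeZero w] (p : Submodule F (α → F)) :
    Module.finrank F (p.map (replicateL α w)) = Module.finrank F p :=
  (LinearEquiv.finrank_eq (Submodule.equivMapOfInjective _ replicateL_injective p)).symm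

lemma encard_support_replicateL {α : Type} (w : ℕ) (x : α → F) :
    {p | replicateL α w x p ≠ 0}.encard = w * {u | x u ≠ 0}.encard := by
  have : {p | replicateL α w x p ≠ 0} = {u | x u ≠ 0} ×ˢ Set.univ := by ext; simp
  rw [this, Set.encard_prod, Set.encard_univ, ENat.card_eq_coe_fintype_card, Fintype.card_fin,
    mul_comm]

lemma eq_replicateL_of_forall_eq_add_one {α : Type} {w : ℕ} [NeZero w] {y : α × Fin w → F}
    (hy : ∀ p : α × Fin w, y p = y (p.1, p.2 + 1)) : y = replicateL α w fun u => y (u, 0) := by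
  obtain ⟨m, rfl⟩ : ∃ m, w = m + 1 := Nat.exists_eq_succ_of_ne_zero (NeZero.ne w)
  ext ⟨u, i⟩
  induction i using Fin.induction with
  | zero => rfl
  | succ i ih =>
    rw [replicateL_apply] at ih ⊢
    rw [← Fin.coeSucc_eq_succ, ← ih, ← hy (u, _)]

-- `g` is a primitive of `f` along the cycle `Fin w`, with the total `∑ f` as defect at `0`.
lemma exists_cyclic_primitive {w : ℕ} [NeZero w] (f : Fin w → F) :
    ∃ g : Fin w → F, ∀ j, (if j = 0 then ∑ k, f k else 0) + (g j - g (j - 1)) = f j := by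
  obtain ⟨m, rfl⟩ : ∃ m, w = m + 1 := Nat.exists_eq_succ_of_ne_zero (NeZero.ne w)
  refine ⟨fun j => ∑ k, if k ≤ j then f k else 0, fun j => ?_⟩
  have hstep : ∀ k, ((if k ≤ j then f k else 0) - if k ≤ j - 1 then f k else 0) =
      (if k = j then f k else 0) - if j = 0 then f k else 0 := by
    intro k
    have hsub : (j - 1).val = if j.val = 0 then m else j.val - 1 := by
      rw [Fin.coe_sub_one]; simp only [Fin.ext_iff, Fin.val_zero]
    have := k.isLt
    simp only [Fin.le_iff_val_le_val, Fin.ext_iff, Fin.val_zero] at hsub ⊢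
    split_ifs at hsub ⊢ <;> first | omega | ring
  rw [← Finset.sum_sub_distrib, Finset.sum_congr rfl fun k _ => hstep k, Finset.sum_sub_distrib,
    Finset.sum_ite_eq' Finset.univ j, if_pos (Finset.mem_univ j)]
  split_ifs <;> simp

end Replicate

namespace BCC2

-- Reducible, so that `(C.amplify w).b1` and `C.b1 × Fin w` are interchangeable under `rw`.
@[reducible] noncomputable def amplify (C : BCC2 F) (w : ℕ) [NeZero w] : BCC2 F where
  b0 := C.b0
  b1 := C.b1 × Fin w
  b2 := C.b2 ⊕ (C.b1 × Fin w)
  d0 := replicateL C.b1 w ∘ₗ C.d0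
  d1 := sumElimL (C.d1 ∘ₗ LinearMap.funLeft F F (·, 0))
    (LinearMap.id - LinearMap.funLeft F F (Prod.map id (· + 1)))
  dd f := by
    ext (c | p)
    · exact congrFun (C.dd f) c
    · exact sub_self _

variable (C : BCC2 F) (w : ℕ) [NeZero w]

lemma card_amplify_b1 : Fintype.card (C.amplify w).b1 = w * Fintype.card C.b1 := by
  rw [Fintype.card_prod, Fintype.card_fin, mul_comm]

lemma amplify_ker_d1 :
    LinearMap.ker (C.amplify w).d1 = (LinearMap.ker C.d1).map (replicateL C.b1 w) := by
  ext y
  constructor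
  · intro hy
    have hcyc : ∀ p : C.b1 × Fin w, y p = y (p.1, p.2 + 1) :=
      fun p => sub_eq_zero.mp (congrFun hy (Sum.inr p))
    refine ⟨fun u => y (u, 0), ?_, (eq_replicateL_of_forall_eq_add_one hcyc).symm⟩
    ext c
    exact congrFun hy (Sum.inl c)
  · rintro ⟨x, hx, rfl⟩
    ext (c | p)
    · exact congrFun (LinearMap.mem_ker.mp hx) c
    · exact sub_self _

lemma amplify_range_d0 :
    LinearMap.range (C.amplify w).d0 = (LinearMap.range C.d0).map (replicateL C.b1 w) :=
  LinearMap.range_comp _ _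

lemma amplify_h1dim : (C.amplify w).h1dim = C.h1dim := by
  rw [h1dim, h1dim, amplify_ker_d1, amplify_range_d0, finrank_map_replicateL,
    finrank_map_replicateL]

lemma amplify_nontrivial_cocycles :
    {y | (C.amplify w).d1 y = 0 ∧ y ∉ LinearMap.range (C.amplify w).d0} =
      replicateL C.b1 w '' {x | C.d1 x = 0 ∧ x ∉ LinearMap.range C.d0} := by
  ext y
  rw [Set.mem_ofPred_eq, ← LinearMap.mem_ker, amplify_ker_d1, amplify_range_d0]
  constructor
  · rintro ⟨⟨x, hx, rfl⟩, hy⟩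
    exact ⟨x, ⟨hx, fun h => hy ⟨x, h, rfl⟩⟩, rfl⟩
  · rintro ⟨x, ⟨hx, hx'⟩, rfl⟩
    exact ⟨⟨x, hx, rfl⟩, fun ⟨x', h', he⟩ => hx' (replicateL_injective he ▸ h')⟩

lemma amplify_dcosys1 : (C.amplify w).dcosys1 = w * C.dcosys1 := by
  have hw : (w : ℕ∞) ≠ 0 := by exact_mod_cast NeZero.ne w
  rw [dcosys1, dcosys1, amplify_nontrivial_cocycles, ← Set.image_comp, sInf_image, sInf_image]
  simp_rw [Function.comp_apply, encard_support_replicateL, ENat.mul_iInf_of_ne hw]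

lemma amplify_d0_transpose_mulVec (y : C.b1 × Fin w → F) :
    (tmat (C.amplify w).d0)ᵀ *ᵥ y = (tmat C.d0)ᵀ *ᵥ fun u => ∑ i, y (u, i) := by
  ext a
  simp only [transpose_tmat_mulVec_apply, Fintype.sum_prod_type, Finset.mul_sum]
  rfl

lemma amplify_d1_transpose_mulVec (z : C.b2 → F) (g : C.b1 × Fin w → F) (v : C.b1)
    (j : Fin w) :
    ((tmat (C.amplify w).d1)ᵀ *ᵥ Sum.elim z g) (v, j) =
      (if j = 0 then ((tmat C.d1)ᵀ *ᵥ z) v else 0) + (g (v, j) - g (v, j - 1)) := by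
  have h0 : LinearMap.funLeft F F (·, (0 : Fin w)) (Pi.single (v, j) (1 : F)) =
      if j = 0 then Pi.single v 1 else 0 := by
    split_ifs with hj
    · exact hj ▸ funLeft_single_apply_self (fun _ _ h => (Prod.ext_iff.mp h).1) v
    · exact funLeft_single_of_notMem_range fun ⟨u, hu⟩ => hj (Prod.ext_iff.mp hu).2.symm
  have hshift : ∀ p : C.b1 × Fin w,
      (Pi.single (v, j) (1 : F) : C.b1 × Fin w → F) (Prod.map id (· + 1) p) =
        (Pi.single (v, j - 1) (1 : F) : C.b1 × Fin w → F) p := by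
    intro p
    simp only [Pi.single_apply, Prod.ext_iff, Prod.map_fst, Prod.map_snd, id, eq_sub_iff_add_eq]
  rw [transpose_tmat_mulVec_apply, Fintype.sum_sum_type]
  simp only [sumElimL, LinearMap.coe_mk, AddHom.coe_mk, Sum.elim_inl, Sum.elim_inr,
    LinearMap.comp_apply, h0, LinearMap.sub_apply, LinearMap.id_apply, LinearMap.funLeft_apply,
    Pi.sub_apply, hshift, sub_mul, Finset.sum_sub_distrib, transpose_tmat_mulVec_apply]
  split_ifs <;> simp [Pi.single_apply]

lemma dsys1_le_amplify_dsys1 : C.dsys1 ≤ (C.amplify w).dsys1 := by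
  refine le_sInf ?_
  rintro _ ⟨y, ⟨hy0, hy1⟩, rfl⟩
  set x : C.b1 → F := fun u => ∑ i, y (u, i)
  have hx0 : (tmat C.d0)ᵀ *ᵥ x = 0 := by rwa [← amplify_d0_transpose_mulVec]
  have hx1 : x ∉ Set.range fun z : C.b2 → F => (tmat C.d1)ᵀ *ᵥ z := by
    rintro ⟨z, hz⟩
    choose g hg using fun v => exists_cyclic_primitive fun j => y (v, j)
    refine hy1 ⟨Sum.elim z fun p => g p.1 p.2, funext fun ⟨v, j⟩ => ?_⟩
    dsimp only
    rw [amplify_d1_transpose_mulVec, show (tmat C.d1)ᵀ *ᵥ z = x from hz]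
    exact hg v j
  calc C.dsys1 ≤ {u | x u ≠ 0}.encard := sInf_le ⟨x, ⟨hx0, hx1⟩, rfl⟩
    _ ≤ (Prod.fst '' {p | y p ≠ 0}).encard := Set.encard_le_encard fun u hu => by
        obtain ⟨i, -, hi⟩ := Finset.exists_ne_zero_of_sum_ne_zero hu
        exact ⟨(u, i), hi, rfl⟩
    _ ≤ {p | y p ≠ 0}.encard := Set.encard_image_le _ _

lemma amplify_loc_le : (C.amplify w).loc ≤ max (w * C.loc) (C.loc + 2) := by
  have hshift : mapLoc (LinearMap.funLeft F F (Prod.map id (· + 1) : C.b1 × Fin w → _)) ≤ 1 :=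
    (mapLoc_comp_funLeft_le LinearMap.id
      (Function.injective_id.prodMap (add_left_injective 1))).trans mapLoc_id_le
  have hd0 : mapLoc (C.amplify w).d0 ≤ w * mapLoc C.d0 := mapLoc_funLeft_fst_comp_le C.d0
  have hd1 : mapLoc (C.amplify w).d1 ≤ mapLoc C.d1 + (1 + 1) :=
    (mapLoc_sumElimL_le _ _).trans <| add_le_add
      (mapLoc_comp_funLeft_le C.d1 fun _ _ h => (Prod.ext_iff.mp h).1)
      ((mapLoc_sub_le _ _).trans (add_le_add mapLoc_id_le hshift))
  exact max_le_max (hd0.trans (Nat.mul_le_mul_left w (le_max_left _ _)))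
    (hd1.trans (Nat.add_le_add_right (le_max_right _ _) 2))

end BCC2

section Forms

variable {r : ℕ}

lemma zloc_le_iff (Cs : Fin r → BCC2 F) (ζ : MultilinearMap F (fun h => (Cs h).b1 → F) F)
    {n : ℕ} : zloc Cs ζ ≤ n ↔ ∀ h (u : (Cs h).b1), Nat.card {uu : ∀ h', (Cs h').b1 //
      uu h = u ∧ ζ (fun h' => Pi.single (uu h') 1) ≠ 0} ≤ n := by
  simp only [zloc, Finset.sup_le_iff, Finset.mem_univ, true_implies]

lemma exists_ne_zero_of_one_le_zloc {Cs : Fin r → BCC2 F}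
    {ζ : MultilinearMap F (fun h => (Cs h).b1 → F) F} (hζ : 1 ≤ zloc Cs ζ) :
    ∃ uu : ∀ h, (Cs h).b1, ζ (fun h => Pi.single (uu h) 1) ≠ 0 := by
  by_contra! H
  have : zloc Cs ζ ≤ 0 := (zloc_le_iff Cs ζ).2 fun h u => by simp [H]
  omega

lemma one_le_zloc {Cs : Fin r → BCC2 F} {ζ : MultilinearMap F (fun h => (Cs h).b1 → F) F}
    (hr : 0 < r) {uu : ∀ h, (Cs h).b1} (huu : ζ (fun h => Pi.single (uu h) 1) ≠ 0) :
    1 ≤ zloc Cs ζ :=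
  (Nat.card_pos_iff.2 ⟨⟨⟨uu, rfl, huu⟩⟩, inferInstance⟩).trans_le
    ((zloc_le_iff Cs ζ).1 le_rfl ⟨0, hr⟩ (uu ⟨0, hr⟩))

lemma exists_coloring_injOn_fibers {X Y : Type} [Fintype X] {w : ℕ} [NeZero w] (f : X → Y)
    (P : X → Prop) (hw : ∀ y, Nat.card {x // f x = y ∧ P x} ≤ w) :
    ∃ c : X → Fin w, ∀ x x', P x → P x' → f x = f x' → c x = c x' → x = x' := by
  classical
  have e : ∀ y, {x // f x = y ∧ P x} ↪ Fin w := fun y =>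
    (Function.Embedding.nonempty_of_card_le (by simpa [Nat.card_eq_fintype_card] using hw y)).some
  refine ⟨fun x => if hx : P x then e (f x) ⟨x, rfl, hx⟩ else 0,
    fun x x' hx hx' hf hc => ?_⟩
  have key : ∀ x (hx : P x) y (hy : f x = y),
      (if hx : P x then e (f x) ⟨x, rfl, hx⟩ else 0) = e y ⟨x, hy, hx⟩ := by
    rintro x hx _ rfl
    simp [hx]
  dsimp only at hc
  rw [key x hx _ rfl, key x' hx' _ hf.symm] at hc
  exact congrArg Subtype.val ((e _).injective hc)

variable {β : Fin r → Type} [∀ h, Fintype (β h)] [∀ h, DecidableEq (β h)] {w : ℕ}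

def IsFiberColoring (ζ : MultilinearMap F (fun h => β h → F) F)
    (c : Fin r → (∀ h, β h) → Fin w) : Prop :=
  ∀ h uu uu', ζ (fun h => Pi.single (uu h) 1) ≠ 0 →
    ζ (fun h => Pi.single (uu' h) 1) ≠ 0 →
    uu h = uu' h → c h uu = c h uu' → uu = uu'

lemma exists_isFiberColoring_of_zloc_le [NeZero w] {Cs : Fin r → BCC2 F}
    {ζ : MultilinearMap F (fun h => (Cs h).b1 → F) F} (hw : zloc Cs ζ ≤ w) :
    ∃ c : Fin r → (∀ h, (Cs h).b1) → Fin w, IsFiberColoring ζ c := by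
  choose c hc using fun h => exists_coloring_injOn_fibers (w := w)
    (fun uu : ∀ h, (Cs h).b1 => uu h)
    (fun uu => ζ (fun h => Pi.single (uu h) 1) ≠ 0) ((zloc_le_iff Cs ζ).1 hw h)
  exact ⟨c, hc⟩

noncomputable def spreadForm (ζ : MultilinearMap F (fun h => β h → F) F)
    (c : Fin r → (∀ h, β h) → Fin w) : MultilinearMap F (fun h => β h × Fin w → F) F :=
  ∑ uu : ∀ h, β h, ζ (fun h => Pi.single (uu h) 1) •
    (MultilinearMap.mkPiAlgebra F (Fin r) F).compLinearMap fun h => LinearMap.proj (uu h, c h uu)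

lemma spreadForm_apply (ζ : MultilinearMap F (fun h => β h → F) F)
    (c : Fin r → (∀ h, β h) → Fin w) (y : ∀ h, β h × Fin w → F) :
    spreadForm ζ c y = ∑ uu, ζ (fun h => Pi.single (uu h) 1) * ∏ h, y h (uu h, c h uu) := by
  simp [spreadForm]

lemma prod_single_one_apply {γ : Fin r → Type} [∀ h, DecidableEq (γ h)] (a b : ∀ h, γ h) :
    ∏ h, (Pi.single (a h) (1 : F) : γ h → F) (b h) = if b = a then 1 else 0 := by
  simp only [Pi.single_apply, Finset.prod_boole, Finset.mem_univ, true_implies, funext_iff]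

lemma spreadForm_apply_replicateL (ζ : MultilinearMap F (fun h => β h → F) F)
    (c : Fin r → (∀ h, β h) → Fin w) (x : ∀ h, β h → F) :
    spreadForm ζ c (fun h => replicateL (β h) w (x h)) = ζ x := by
  suffices (spreadForm ζ c).compLinearMap (fun h => replicateL (β h) w) = ζ from
    DFunLike.congr_fun this x
  refine Module.Basis.ext_multilinear (fun h => Pi.basisFun F (β h)) fun uu => ?_
  simp [spreadForm_apply, prod_single_one_apply]

lemma spreadForm_apply_single (ζ : MultilinearMap F (fun h => β h → F) F)
    (c : Fin r → (∀ h, β h) → Fin w) (pp : ∀ h, β h × Fin w) :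
    spreadForm ζ c (fun h => Pi.single (pp h) 1) =
      ∑ uu, if (fun h => (uu h, c h uu)) = pp then ζ (fun h => Pi.single (uu h) 1) else 0 := by
  simp [spreadForm_apply, prod_single_one_apply]

lemma zloc_amplify_spreadForm [NeZero w] (hr : 0 < r) {Cs : Fin r → BCC2 F}
    {ζ : MultilinearMap F (fun h => (Cs h).b1 → F) F}
    {c : Fin r → (∀ h, (Cs h).b1) → Fin w} (hc : IsFiberColoring ζ c)
    (hζ : ∃ uu : ∀ h, (Cs h).b1, ζ (fun h => Pi.single (uu h) 1) ≠ 0) :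
    zloc (fun h => (Cs h).amplify w) (spreadForm ζ c) = 1 := by
  have hsupp : ∀ pp : ∀ h, (Cs h).b1 × Fin w,
      spreadForm ζ c (fun h => Pi.single (pp h) 1) ≠ 0 →
      ∃ uu, ζ (fun h => Pi.single (uu h) 1) ≠ 0 ∧ (fun h => (uu h, c h uu)) = pp := by
    intro pp hpp
    rw [spreadForm_apply_single] at hpp
    obtain ⟨uu, -, hu⟩ := Finset.exists_ne_zero_of_sum_ne_zero hpp
    exact ⟨uu, by split_ifs at hu with h <;> simp_all⟩
  have hval : ∀ uu, spreadForm ζ c (fun h => Pi.single ((uu h, c h uu) : (Cs h).b1 × Fin w) 1) =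
      ζ (fun h => Pi.single (uu h) 1) := by
    intro uu
    rw [spreadForm_apply_single, Finset.sum_eq_single uu (fun vv _ hvv => if_neg fun h =>
      hvv (funext fun i => congrArg Prod.fst (congrFun h i))) (by simp), if_pos rfl]
  refine le_antisymm ((zloc_le_iff _ _).2 fun h p => ?_) ?_
  · refine Finite.card_le_one_iff_subsingleton.2
      ⟨fun ⟨pp, hp, hne⟩ ⟨pp', hp', hne'⟩ => ?_⟩
    obtain ⟨uu, hu, rfl⟩ := hsupp pp hne
    obtain ⟨uu', hu', rfl⟩ := hsupp pp' hne'
    have := hp.trans hp'.symm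
    obtain rfl := hc h uu uu' hu hu' (congrArg Prod.fst this) (congrArg Prod.snd this)
    rfl
  · obtain ⟨uu, hu⟩ := hζ
    exact one_le_zloc hr ((hval uu).trans_ne hu)

end Forms

section Transfer

variable {r : ℕ} {Cs Ct : Fin r → BCC2 F} {ζ : MultilinearMap F (fun h => (Cs h).b1 → F) F}
  {ζt : MultilinearMap F (fun h => (Ct h).b1 → F) F}
  (ι : ∀ h, ((Cs h).b1 → F) →ₗ[F] ((Ct h).b1 → F))

lemma CobInv.map (hζ : ∀ x, ζt (fun h => ι h (x h)) = ζ x)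
    {W : ∀ h, Submodule F ((Cs h).b1 → F)}
    (hB : ∀ h, LinearMap.range (Ct h).d0 = (LinearMap.range (Cs h).d0).map (ι h))
    (hinv : CobInv Cs ζ W) : CobInv Ct ζt fun h => (W h).map (ι h) := by
  intro z b hz hb
  choose x hxW hx using fun h => Submodule.mem_map.mp (hz h)
  choose y hyB hy using fun h => Submodule.mem_map.mp (hB h ▸ hb h)
  have hzb : (fun h => z h + b h) = fun h => ι h (x h + y h) := by
    ext1 h; rw [map_add, hx, hy]
  rw [hzb, hζ, hinv x y hxW hyB, ← hζ]
  exact congrArg ζt (funext hx)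

lemma subrankGE_map_iff (hζ : ∀ x, ζt (fun h => ι h (x h)) = ζ x)
    (W : ∀ h, Submodule F ((Cs h).b1 → F)) (s : ℕ) (hr : 0 < r) :
    SubrankGE Ct ζt (fun h => (W h).map (ι h)) s hr ↔ SubrankGE Cs ζ W s hr := by
  constructor
  · rintro ⟨v, hvW, hv⟩
    choose v' hv'W hv' using fun h j => Submodule.mem_map.mp (hvW h j)
    refine ⟨v', hv'W, fun jj => ?_⟩
    rw [← hζ, ← hv jj]
    exact congrArg ζt (funext fun h => hv' h (jj h))
  · rintro ⟨v, hvW, hv⟩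
    exact ⟨fun h j => ι h (v h j), fun h j => Submodule.mem_map_of_mem (hvW h j),
      fun jj => (hζ _).trans (hv jj)⟩

end Transfer

/-- locality reduction; Lemma 3.31.  Given 2-dimensional based cochain
complexes `C⁽ʰ⁾` over `F_q` and a multilinear form `ζ` on their 1-cochains of locality
`w^ζ ≥ 1` that is coboundary-invariant on some `H' = (H'_h ⊆ H^1(C⁽ʰ⁾))` (represented by
intermediate subspaces `W h`), there exist 2-dimensional based complexes `C̃⁽ʰ⁾` and a
multilinear form `ζ̃` coboundary-invariant on some `H̃'` with: `dim (C̃⁽ʰ⁾)^1 = w^ζ ·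
dim (C⁽ʰ⁾)^1`; `dim H^1(C̃⁽ʰ⁾) = dim H^1(C⁽ʰ⁾)`; `d^1(C̃⁽ʰ⁾) = w^ζ · d^1(C⁽ʰ⁾)`;
`d_1(C̃⁽ʰ⁾) ≥ d_1(C⁽ʰ⁾)`; locality of `C̃⁽ʰ⁾` at most `max {w^ζ·w^{C⁽ʰ⁾}, w^{C⁽ʰ⁾}+2}`;
`ζ̃` has locality 1; and `subrank(ζ̃_{H̃'}) = subrank(ζ_{H'})`. -/
theorem stmt19 (F : Type) [Field F] (r : ℕ) (hr : 2 ≤ r)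
    (Cs : Fin r → BCC2 F)
    (ζ : MultilinearMap F (fun h => (Cs h).b1 → F) F)
    (W : ∀ h, Submodule F ((Cs h).b1 → F))
    (hBW : ∀ h, LinearMap.range (Cs h).d0 ≤ W h)
    (hWZ : ∀ h, W h ≤ LinearMap.ker (Cs h).d1)
    (hinv : CobInv Cs ζ W) (hloc : 1 ≤ zloc Cs ζ) :
    ∃ (Ct : Fin r → BCC2 F) (ζt : MultilinearMap F (fun h => (Ct h).b1 → F) F)
      (Wt : ∀ h, Submodule F ((Ct h).b1 → F)),
      (∀ h, LinearMap.range (Ct h).d0 ≤ Wt h) ∧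
      (∀ h, Wt h ≤ LinearMap.ker (Ct h).d1) ∧
      CobInv Ct ζt Wt ∧
      (∀ h, Fintype.card (Ct h).b1 = zloc Cs ζ * Fintype.card (Cs h).b1) ∧
      (∀ h, (Ct h).h1dim = (Cs h).h1dim) ∧
      (∀ h, (Ct h).dcosys1 = (zloc Cs ζ : ℕ∞) * (Cs h).dcosys1) ∧
      (∀ h, (Cs h).dsys1 ≤ (Ct h).dsys1) ∧
      (∀ h, (Ct h).loc ≤ max (zloc Cs ζ * (Cs h).loc) ((Cs h).loc + 2)) ∧
      zloc Ct ζt = 1 ∧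
      (∀ s : ℕ, SubrankGE Cs ζ W s (by omega) ↔ SubrankGE Ct ζt Wt s (by omega)) := by
  set w := zloc Cs ζ
  have : NeZero w := ⟨by omega⟩
  obtain ⟨c, hc⟩ := exists_isFiberColoring_of_zloc_le (le_refl w)
  have hζt := spreadForm_apply_replicateL ζ c
  refine ⟨fun h => (Cs h).amplify w, spreadForm ζ c, fun h => (W h).map (replicateL _ w),
    fun h => ?_, fun h => ?_, hinv.map _ hζt fun h => (Cs h).amplify_range_d0 w,
    fun h => (Cs h).card_amplify_b1 w, fun h => (Cs h).amplify_h1dim w,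
    fun h => (Cs h).amplify_dcosys1 w, fun h => (Cs h).dsys1_le_amplify_dsys1 w,
    fun h => (Cs h).amplify_loc_le w,
    zloc_amplify_spreadForm (by omega) hc (exists_ne_zero_of_one_le_zloc hloc),
    fun s => (subrankGE_map_iff _ hζt W s _).symm⟩
  · rw [BCC2.amplify_range_d0]
    exact Submodule.map_mono (hBW h)
  · rw [BCC2.amplify_ker_d1]
    exact Submodule.map_mono (hWZ h)
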